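/- arXiv:1701.05535 — 2 statements merged into one kernel-verified Lean document; each statement's English description precedes it below -/
import Mathlib

section
/- There exist constants C > 0 and d_0 > 1 such that for all real d ≥ d_0, |ξ_d - log(2d)/d| ≤ C (log d)²/d³, where ξ_d is the unique positive root of cosh(d ξ) = d cosh(ξ). -/
/-!
The function `t ↦ cosh (d t) - d cosh t` is strictly increasing on `[0, ∞)` for `d > 1`, and
`ξ_d` is its positive zero. At `t = (log (2d) ± s)/d` we have
`cosh (d t) = d e^{±s} + e^{∓s}/(4d)`, while `d cosh t = d (1 + O(t²))` with `t ≈ log d / d`.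
With `s = 10 (log d)² / d²` the function is negative at the left point and positive at the
right one, so `ξ_d` lies within `s / d = 10 (log d)² / d³` of `log (2d) / d`.
-/

open Real Set

lemma Real.cosh_le_one_add_sq {x : ℝ} (hx : |x| ≤ 1) : cosh x ≤ 1 + x ^ 2 := by
  have h : |x ^ 2 / 2| ≤ 1 := by
    rw [abs_of_nonneg (by positivity)]
    nlinarith [sq_abs x, abs_nonneg x]
  have := (abs_le.mp (abs_exp_sub_one_le h)).2
  rw [abs_of_nonneg (by positivity : (0:ℝ) ≤ x ^ 2 / 2)] at this
  linarith [cosh_le_exp_half_sq x]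

lemma Real.cosh_log_add {x : ℝ} (hx : 0 < x) (s : ℝ) :
    cosh (log x + s) = (x * exp s + exp (-s) / x) / 2 := by
  rw [cosh_eq, exp_add, exp_log hx, neg_add, exp_add, exp_neg (log x), exp_log hx]
  ring

lemma strictMonoOn_cosh_mul_sub_mul_cosh {d : ℝ} (hd : 1 < d) :
    StrictMonoOn (fun t => cosh (d * t) - d * cosh t) (Ici 0) := by
  have hderiv (t : ℝ) : HasDerivAt (fun t => cosh (d * t) - d * cosh t)
      (d * (sinh (d * t) - sinh t)) t := by
    have h := (((hasDerivAt_id' t).const_mul d).cosh).sub ((hasDerivAt_cosh t).const_mul d)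
    exact h.congr_deriv (by ring)
  refine strictMonoOn_of_deriv_pos (convex_Ici 0) (by fun_prop) fun t ht => ?_
  rw [interior_Ici, mem_Ioi] at ht
  rw [(hderiv t).deriv]
  have : sinh t < sinh (d * t) := sinh_lt_sinh.mpr (by nlinarith)
  nlinarith

lemma Real.log_sq_le_four_mul {x : ℝ} (hx : 1 ≤ x) : log x ^ 2 ≤ 4 * x := by
  have h : log x ≤ 2 * √x := by
    have := log_le_rpow_div (by linarith : (0:ℝ) ≤ x) one_half_pos
    rwa [← sqrt_eq_rpow, div_eq_mul_inv, inv_div, div_one, mul_comm] at this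
  calc log x ^ 2 ≤ (2 * √x) ^ 2 := pow_le_pow_left₀ (log_nonneg hx) h 2
    _ = 4 * x := by rw [mul_pow, sq_sqrt (by linarith)]; norm_num

lemma mul_cosh_lt_cosh_mul_of_mul_eq_log_add {d s x : ℝ} (hd : 0 < d)
    (hx : d * x = log (2 * d) + s) (hxs : x ^ 2 < s) (hs : s ≤ 1) :
    d * cosh x < cosh (d * x) := by
  have hx1 : |x| ≤ 1 := (sq_le_one_iff_abs_le_one x).mp (by linarith)
  calc d * cosh x ≤ d * (1 + x ^ 2) := by gcongr; exact cosh_le_one_add_sq hx1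
    _ < d * (1 + s) := by gcongr
    _ ≤ d * exp s := by gcongr; linarith [add_one_le_exp s]
    _ ≤ cosh (d * x) := by
      rw [hx, cosh_log_add (by positivity)]
      have : 0 < exp (-s) / (2 * d) := by positivity
      linarith

lemma cosh_mul_lt_mul_cosh_of_mul_eq_log_sub {d s x : ℝ} (hd : 0 < d)
    (hx : d * x = log (2 * d) - s) (hs : s ≤ 1 / 2) (hds : 1 < d ^ 2 * s) :
    cosh (d * x) < d * cosh x := by
  have hs0 : 0 ≤ s := (pos_of_mul_pos_right (by linarith) (sq_nonneg d)).le
  have hs1 : |s| ≤ 1 := by rw [abs_of_nonneg hs0]; linarith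
  have hneg : exp (-s) ≤ 1 - s / 2 := by
    have := (abs_le.mp (abs_exp_sub_one_sub_id_le (x := -s) (by rwa [abs_neg]))).2
    nlinarith
  have hpos : exp s ≤ 2 := by
    have := (abs_le.mp (abs_exp_sub_one_le hs1)).2
    rw [abs_of_nonneg hs0] at this
    linarith
  calc cosh (d * x) = d * exp (-s) + exp s / (4 * d) := by
        rw [hx, sub_eq_add_neg, cosh_log_add (by positivity), neg_neg]
        field_simp
        ring
    _ ≤ d * (1 - s / 2) + 2 / (4 * d) := by gcongr
    _ < d := by
      rw [← sub_pos]
      have : d * (1 - s / 2) + 2 / (4 * d) = d - (d ^ 2 * s - 1) / (2 * d) := by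
        field_simp; ring
      rw [this, sub_sub_cancel]
      exact div_pos (by linarith) (by positivity)
    _ ≤ d * cosh x := le_mul_of_one_le_right hd.le (one_le_cosh x)

lemma abs_sub_log_two_mul_div_lt {d s ξ : ℝ} (hd : 1 < d) (hξ : 0 ≤ ξ)
    (heq : cosh (d * ξ) = d * cosh ξ) (hs : s ≤ 1 / 2)
    (hup : (log (2 * d) + s) ^ 2 < d ^ 2 * s) (hlow : 1 < d ^ 2 * s) :
    |ξ - log (2 * d) / d| < s / d := by
  have hd0 : 0 < d := by linarith
  have hs0 : 0 < s := pos_of_mul_pos_right (by linarith) (sq_nonneg d)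
  set f := fun t => cosh (d * t) - d * cosh t
  have hmono : StrictMonoOn f (Ici 0) := strictMonoOn_cosh_mul_sub_mul_cosh hd
  have hfξ : f ξ = 0 := sub_eq_zero.mpr heq
  set a := (log (2 * d) - s) / d
  set b := (log (2 * d) + s) / d
  have hfa : f a < 0 := sub_neg.mpr <|
    cosh_mul_lt_mul_cosh_of_mul_eq_log_sub hd0 (mul_div_cancel₀ _ hd0.ne') hs hlow
  have hfb : 0 < f b := by
    refine sub_pos.mpr <| mul_cosh_lt_cosh_mul_of_mul_eq_log_add hd0
      (mul_div_cancel₀ _ hd0.ne') ?_ (by linarith)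
    rw [div_pow, div_lt_iff₀ (by positivity)]
    linarith
  have hb : 0 ≤ b := by
    have := log_pos (by linarith : (1:ℝ) < 2 * d)
    positivity
  have haξ : a < ξ := by
    by_contra! h
    have := hmono.monotoneOn hξ (hξ.trans h) h
    linarith
  have hξb : ξ < b := (hmono.lt_iff_lt hξ hb).mp (by rwa [hfξ])
  rw [abs_sub_lt_iff]
  constructor
  · simp only [b, add_div] at hξb; linarith
  · simp only [a, sub_div] at haξ; linarith

/-- Asymptotics of `ξ_d`: if for each real `d > 1`, `ξ d` is the unique positive root of
`cosh (d ξ) = d cosh ξ`, then `ξ d = log (2d)/d + O((log d)²/d³)` as `d → ∞`. -/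
theorem stmt_7 (ξ : ℝ → ℝ)
    (hξ : ∀ d : ℝ, 1 < d → 0 < ξ d ∧ Real.cosh (d * ξ d) = d * Real.cosh (ξ d)) :
    ∃ C : ℝ, 0 < C ∧ ∃ d₀ : ℝ, 1 < d₀ ∧ ∀ d : ℝ, d₀ ≤ d →
      |ξ d - Real.log (2 * d) / d| ≤ C * (Real.log d) ^ 2 / d ^ 3 := by
  refine ⟨10, by norm_num, 80, by norm_num, fun d hd => ?_⟩
  have hd0 : 0 < d := by linarith
  obtain ⟨hξpos, hξeq⟩ := hξ d (by linarith)
  have hl1 : 1 ≤ log d := by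
    rw [le_log_iff_exp_le hd0]
    linarith [exp_one_lt_d9]
  have hl2 := log_sq_le_four_mul (by linarith : 1 ≤ d)
  have hlog2d : log (2 * d) = log 2 + log d := log_mul two_ne_zero hd0.ne'
  have hlog2 : log 2 < 1 := by linarith [log_two_lt_d9]
  set s := 10 * log d ^ 2 / d ^ 2
  have hds : d ^ 2 * s = 10 * log d ^ 2 := by simp only [s]; field_simp
  have hs : s ≤ 1 / 2 := by
    rw [div_le_iff₀ (by positivity)]
    nlinarith
  have hup : (log (2 * d) + s) ^ 2 < d ^ 2 * s := by
    have h : log (2 * d) + s ≤ 5 / 2 * log d := by linarith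
    have h0 : 0 ≤ log (2 * d) + s :=
      add_nonneg (by linarith [log_nonneg one_le_two]) (by positivity)
    rw [hds]
    nlinarith [pow_le_pow_left₀ h0 h 2]
  calc |ξ d - log (2 * d) / d| ≤ s / d :=
        (abs_sub_log_two_mul_div_lt (by linarith) hξpos.le hξeq hs hup
          (by rw [hds]; nlinarith)).le
    _ = 10 * log d ^ 2 / d ^ 3 := by simp only [s]; field_simp
end

section
/- Let d be an odd integer with d ≥ 3, and let a, b ≥ 0 satisfy a^d + b^d = a + b. Set c := a - b^d. Then q_c(-b) = a and q_c(a) = -b, the interval [-b, a] is invariant under q_c, and consequently c ∈ N_d. -/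
/-!
For odd `d` the map `x ↦ -x ^ d + c` is decreasing on `ℝ`, so it maps `[-b, a]` into the interval
between its values at the endpoints, which the relation `a ^ d + b ^ d = a + b` makes exactly
`a` and `-b`. The critical orbit starts at `0 ∈ [-b, a]` and, being real, never leaves this interval.
-/

open Function Set

lemma Odd.antitone_neg_pow_add {d : ℕ} (hd : Odd d) (c : ℝ) : Antitone fun x : ℝ => -x ^ d + c :=
  fun _ _ hxy => add_le_add_left (neg_le_neg (hd.strictMono_pow.monotone hxy)) c

lemma bddAbove_range_norm_iterate_of_semiconj_ofReal {f : ℝ → ℝ} {F : ℂ → ℂ}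
    (hF : Semiconj ((↑) : ℝ → ℂ) f F) {s : Set ℝ} (hs : Bornology.IsBounded s)
    (hf : MapsTo f s s) {x : ℝ} (hx : x ∈ s) : BddAbove (range fun n => ‖F^[n] x‖) := by
  obtain ⟨C, hC⟩ := isBounded_iff_forall_norm_le.mp hs
  refine ⟨C, forall_mem_range.mpr fun n => ?_⟩
  rw [← (hF.iterate_right n) x, Complex.norm_real]
  exact hC _ (hf.iterate n hx)

theorem stmt_16_general (d : ℕ) (hodd : Odd d) (a b : ℝ)
    (ha : 0 ≤ a) (hb : 0 ≤ b) (hab : a ^ d + b ^ d = a + b) :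
    -(-b) ^ d + (a - b ^ d) = a ∧
    -a ^ d + (a - b ^ d) = -b ∧
    (∀ x ∈ Set.Icc (-b) a, -x ^ d + (a - b ^ d) ∈ Set.Icc (-b) a) ∧
    BddAbove (Set.range fun n =>
      ‖(fun z : ℂ => -z ^ d + ((a - b ^ d : ℝ) : ℂ))^[n] 0‖) := by
  have h_neg_b : -(-b) ^ d + (a - b ^ d) = a := by rw [hodd.neg_pow]; ring
  have h_a : -a ^ d + (a - b ^ d) = -b := by linarith
  have h_mapsTo : MapsTo (fun x : ℝ => -x ^ d + (a - b ^ d)) (Icc (-b) a) (Icc (-b) a) := by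
    have := (hodd.antitone_neg_pow_add (a - b ^ d)).mapsTo_Icc (a := -b) (b := a)
    rwa [h_neg_b, h_a] at this
  have h_semiconj : Semiconj ((↑) : ℝ → ℂ) (fun x : ℝ => -x ^ d + (a - b ^ d))
      (fun z : ℂ => -z ^ d + ((a - b ^ d : ℝ) : ℂ)) := fun x => by push_cast; ring
  refine ⟨h_neg_b, h_a, h_mapsTo, ?_⟩
  simpa using bddAbove_range_norm_iterate_of_semiconj_ofReal h_semiconj
    (Metric.isBounded_Icc _ _) h_mapsTo (x := 0) ⟨by linarith, ha⟩

/-- For odd `d ≥ 3` and `a, b ≥ 0` with `a^d + b^d = a + b`, setting `c = a - b^d`,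
we have `q_c(-b) = a`, `q_c(a) = -b`, the interval `[-b, a]` is `q_c`-invariant, and
consequently `c ∈ N_d`. -/
theorem stmt_16 (d : ℕ) (hd : 3 ≤ d) (hodd : Odd d) (a b : ℝ)
    (ha : 0 ≤ a) (hb : 0 ≤ b) (hab : a ^ d + b ^ d = a + b) :
    -(-b) ^ d + (a - b ^ d) = a ∧
    -a ^ d + (a - b ^ d) = -b ∧
    (∀ x ∈ Set.Icc (-b) a, -x ^ d + (a - b ^ d) ∈ Set.Icc (-b) a) ∧
    BddAbove (Set.range fun n =>
      ‖(fun z : ℂ => -z ^ d + ((a - b ^ d : ℝ) : ℂ))^[n] 0‖) :=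
  stmt_16_general d hodd a b ha hb hab
end
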